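/- For all integers n ≥ 0 and j ≥ 0, d_{13j+3}(13n + 11) ≡ 0 (mod 13). -/

import Mathlib

/-- `ElongatedDiamondGF d` says that for every `k ≥ 1`, the sequence `d k` satisfies the
formal power series identity `∑_{n≥0} d_k(n) q^n = ∏_{m≥1} (1 − q^{2m})^k / ∏_{m≥1} (1 − q^m)^{3k+1}`
in `ℤ[[q]]`, i.e. `(∑_{n≥0} d_k(n) q^n) · ∏_{m≥1} (1 − q^m)^{3k+1} = ∏_{m≥1} (1 − q^{2m})^k`.
Since the factors with `m > n` do not affect the coefficient of `q^n`, this infinite-product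
identity is encoded coefficient-wise via the truncated (finite) products over `1 ≤ m ≤ n`.
Combinatorially, `d k n` counts the partitions obtained by adding the links of the
`k`-elongated plane partition diamonds of length `n`. -/
def ElongatedDiamondGF (d : ℕ → ℕ → ℤ) : Prop :=
  ∀ k : ℕ, 1 ≤ k → ∀ n : ℕ,
    (PowerSeries.coeff (R := ℤ) n)
        ((PowerSeries.mk fun i => d k i) *
          ∏ m ∈ Finset.Icc 1 n, (1 - PowerSeries.X ^ m) ^ (3 * k + 1)) =
      (PowerSeries.coeff (R := ℤ) n) (∏ m ∈ Finset.Icc 1 n, (1 - PowerSeries.X ^ (2 * m)) ^ k)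

/-!
Let `f(q) = ∏_{m ≥ 1} (1 - q^m)` and `k = 13j + 3`, so that `3k + 1 + 3 = 13(3j + 1)`.
Modulo 13, Frobenius gives `f(q)^13 = f(q^13)`, hence
`(∑ d_k(n) q^n) · f(q^13)^(3j+1) = f(q^26)^j · f(q)^3 f(q^2)^3`,
and it suffices that the coefficients of `f(q)^3 f(q^2)^3` at exponents `c ≡ 11 (mod 13)` vanish
mod 13. By Jacobi's identity `f(q)^3 = ∑_i (-1)^i (2i+1) q^(i(i+1)/2)`, such a coefficient is a
sum of `±(2i+1)(2i'+1)` over `(2i+1)^2 + 2(2i'+1)^2 = 8c + 3 ≡ 0 (mod 13)`, and since `-2` is not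
a square mod 13 each of these products is divisible by 13.

Jacobi's identity is proved modulo `q^K`: the `q`-binomial theorem gives a finite form of the
triple product, `∏_{i ≤ m} (1 - q^(i+1) w)(q^i - w) = ∑_k ± [2m+2, k]_q q^(…) w^k`; differentiating
at `w = 1` and pairing the terms `k = m - j`, `k = m + 1 + j` gives a finite Jacobi identity, and for
`m = 2K` the Gaussian binomials that survive modulo `q^K` all agree with `1 / (q; q)_K`.
-/

open Finset

lemma sum_range_id_eq_choose_two (n : ℕ) : ∑ i ∈ range n, i = n.choose 2 := by
  rw [sum_range_id, Nat.choose_two_right]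

lemma two_mul_choose_two_succ (m : ℕ) : 2 * (m + 1).choose 2 = m * (m + 1) := by
  rw [Nat.choose_two_right, Nat.add_sub_cancel, mul_comm (m + 1)]
  exact Nat.mul_div_cancel' (Nat.even_mul_succ_self m).two_dvd

lemma le_choose_two_succ (j : ℕ) : j ≤ (j + 1).choose 2 := by
  rw [Nat.choose_succ_succ', Nat.choose_one_right]
  exact Nat.le_add_right j _

lemma choose_two_sub_add_mul {m j : ℕ} (h : j ≤ m) :
    (m - j).choose 2 + m * (2 * m + 2 - (m - j)) = 3 * (m + 1).choose 2 + (j + 1).choose 2 := by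
  rw [show 2 * m + 2 - (m - j) = m + 2 + j by omega]
  qify
  simp only [Nat.cast_choose_two]
  push_cast [h]
  ring

lemma choose_two_add_add_mul {m j : ℕ} (h : j ≤ m + 1) :
    (m + 1 + j).choose 2 + m * (2 * m + 2 - (m + 1 + j)) =
      3 * (m + 1).choose 2 + (j + 1).choose 2 := by
  rw [show 2 * m + 2 - (m + 1 + j) = m + 1 - j by omega]
  qify
  simp only [Nat.cast_choose_two]
  push_cast [h]
  ring

section GaussianBinomial

variable {R S : Type*} [CommRing R] [CommRing S]

def qPochhammer (q : R) (n : ℕ) : R := ∏ i ∈ range n, (1 - q ^ (i + 1))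

def gaussBinom (q : R) : ℕ → ℕ → R
  | _, 0 => 1
  | 0, _ + 1 => 0
  | n + 1, k + 1 => q ^ (k + 1) * gaussBinom q n (k + 1) + gaussBinom q n k

variable (q : R)

@[simp] lemma gaussBinom_zero_right (n : ℕ) : gaussBinom q n 0 = 1 := by cases n <;> rfl

@[simp] lemma gaussBinom_zero_succ (k : ℕ) : gaussBinom q 0 (k + 1) = 0 := rfl

lemma gaussBinom_succ_succ (n k : ℕ) :
    gaussBinom q (n + 1) (k + 1) = q ^ (k + 1) * gaussBinom q n (k + 1) + gaussBinom q n k := rfl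

lemma gaussBinom_eq_zero_of_lt {n k : ℕ} (h : n < k) : gaussBinom q n k = 0 := by
  induction n generalizing k with
  | zero => obtain ⟨k, rfl⟩ := Nat.exists_eq_add_of_lt h; rfl
  | succ n ih =>
    obtain ⟨k, rfl⟩ := Nat.exists_eq_add_of_lt (Nat.zero_lt_of_lt h)
    rw [gaussBinom_succ_succ, ih (by omega), ih (by omega), mul_zero, add_zero]

@[simp] lemma gaussBinom_self (n : ℕ) : gaussBinom q n n = 1 := by
  induction n with
  | zero => rfl
  | succ n ih => rw [gaussBinom_succ_succ, gaussBinom_eq_zero_of_lt q n.lt_succ_self, ih]; ring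

lemma map_gaussBinom (φ : R →+* S) (n k : ℕ) : φ (gaussBinom q n k) = gaussBinom (φ q) n k := by
  induction n generalizing k with
  | zero => cases k <;> simp
  | succ n ih => cases k <;> simp [gaussBinom_succ_succ, ih]

lemma map_qPochhammer {F : Type*} [FunLike F R S] [RingHomClass F R S] (φ : F) (n : ℕ) :
    φ (qPochhammer q n) = qPochhammer (φ q) n := by
  simp [qPochhammer]

@[simp] lemma qPochhammer_zero : qPochhammer q 0 = 1 := prod_range_zero _

lemma qPochhammer_succ (n : ℕ) : qPochhammer q (n + 1) = qPochhammer q n * (1 - q ^ (n + 1)) :=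
  prod_range_succ _ n

lemma prod_Icc_one_sub_pow (N : ℕ) : ∏ m ∈ Icc 1 N, (1 - q ^ m) = qPochhammer q N := by
  induction N with
  | zero => simp
  | succ N ih => rw [prod_Icc_succ_top (by omega), ih, qPochhammer_succ]

lemma gaussBinom_add_mul_qPochhammer (a b : ℕ) :
    gaussBinom q (a + b) a * qPochhammer q a * qPochhammer q b = qPochhammer q (a + b) := by
  induction a generalizing b with
  | zero => simp
  | succ a iha =>
    induction b with
    | zero => simp
    | succ b ihb =>
      have h := iha (b + 1)
      rw [show a + (b + 1) = a + 1 + b by ring, qPochhammer_succ q b] at h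
      rw [show a + 1 + (b + 1) = a + 1 + b + 1 by ring, gaussBinom_succ_succ,
        qPochhammer_succ q (a + 1 + b), qPochhammer_succ q b]
      linear_combination q ^ (a + 1) * (1 - q ^ (b + 1)) * ihb + (1 - q ^ (a + 1)) * h
        + gaussBinom q (a + 1 + b) a * qPochhammer q b * (1 - q ^ (b + 1)) * qPochhammer_succ q a

/-- The `q`-binomial theorem. -/
theorem prod_range_add_pow_mul (x y : R) (N : ℕ) :
    ∏ i ∈ range N, (x + q ^ i * y) =
      ∑ k ∈ range (N + 1), q ^ k.choose 2 * gaussBinom q N k * x ^ (N - k) * y ^ k := by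
  induction N generalizing y with
  | zero => simp
  | succ N ih =>
    have hshift : ∏ i ∈ range N, (x + q ^ (i + 1) * y) = ∏ i ∈ range N, (x + q ^ i * (q * y)) :=
      prod_congr rfl fun i _ => by ring
    have hsplit : ∀ k ∈ range (N + 1),
        q ^ (k + 1).choose 2 * gaussBinom q (N + 1) (k + 1) * x ^ (N + 1 - (k + 1)) * y ^ (k + 1) =
          q ^ (k + 1).choose 2 * q ^ (k + 1) * gaussBinom q N (k + 1) * x ^ (N - k) * y ^ (k + 1)
            + y * (q ^ k.choose 2 * gaussBinom q N k * x ^ (N - k) * (q * y) ^ k) := by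
      intro k _
      rw [gaussBinom_succ_succ, Nat.choose_succ_succ', Nat.choose_one_right, Nat.add_sub_add_right]
      ring
    have hx : ∑ k ∈ range (N + 1),
          q ^ (k + 1).choose 2 * q ^ (k + 1) * gaussBinom q N (k + 1) * x ^ (N - k) * y ^ (k + 1)
          + x ^ (N + 1) =
        x * ∑ k ∈ range (N + 1), q ^ k.choose 2 * gaussBinom q N k * x ^ (N - k) * (q * y) ^ k := by
      rw [sum_range_succ, gaussBinom_eq_zero_of_lt q N.lt_succ_self, sum_range_succ', mul_add,
        mul_sum]
      have hterm : ∀ k ∈ range N,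
          q ^ (k + 1).choose 2 * q ^ (k + 1) * gaussBinom q N (k + 1) * x ^ (N - k) * y ^ (k + 1) =
            x * (q ^ (k + 1).choose 2 * gaussBinom q N (k + 1) * x ^ (N - (k + 1)) *
              (q * y) ^ (k + 1)) := by
        intro k hk
        rw [show N - k = N - (k + 1) + 1 by have := mem_range.mp hk; omega]
        ring
      simp only [sum_congr rfl hterm, mul_zero, zero_mul, add_zero, Nat.choose_zero_succ,
        gaussBinom_zero_right, Nat.sub_zero, pow_zero, mul_one, one_mul, ← pow_succ']
    rw [prod_range_succ', pow_zero, one_mul, hshift, ih, sum_range_succ' _ (N + 1),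
      sum_congr rfl hsplit, sum_add_distrib, ← mul_sum]
    simp only [Nat.choose_zero_succ, gaussBinom_zero_right, Nat.sub_zero, pow_zero, mul_one]
    linear_combination -hx

lemma prod_range_pow_add_pow_mul_neg (w : R) (m : ℕ) :
    ∏ i ∈ range (2 * m + 2), (q ^ m + q ^ i * -w) =
      q ^ (3 * (m + 1).choose 2) * ∏ i ∈ range (m + 1), ((1 - q ^ (i + 1) * w) * (q ^ i - w)) := by
  have hlow : ∏ i ∈ range (m + 1), (q ^ m + q ^ i * -w) =
      q ^ (m + 1).choose 2 * ∏ i ∈ range (m + 1), (q ^ i - w) := by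
    rw [← sum_range_id_eq_choose_two, ← prod_pow_eq_pow_sum, ← prod_range_reflect (q ^ ·),
      ← prod_range_reflect (fun i => q ^ m + q ^ i * -w), ← prod_mul_distrib]
    refine prod_congr rfl fun i hi => ?_
    rw [Nat.add_sub_cancel, ← pow_sub_mul_pow q (Nat.lt_succ_iff.mp (mem_range.mp hi))]
    ring
  have hhigh : ∏ i ∈ range (m + 1), (q ^ m + q ^ (m + 1 + i) * -w) =
      q ^ (2 * (m + 1).choose 2) * ∏ i ∈ range (m + 1), (1 - q ^ (i + 1) * w) := by
    have hconst : (q ^ m) ^ (m + 1) = ∏ _i ∈ range (m + 1), q ^ m := by simp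
    rw [two_mul_choose_two_succ, pow_mul, hconst, ← prod_mul_distrib]
    exact prod_congr rfl fun i _ => by ring
  rw [show 2 * m + 2 = (m + 1) + (m + 1) by ring, prod_range_add, hlow, hhigh, prod_mul_distrib]
  ring

theorem finite_triple_product (w : R) (m : ℕ) :
    q ^ (3 * (m + 1).choose 2) * ∏ i ∈ range (m + 1), ((1 - q ^ (i + 1) * w) * (q ^ i - w)) =
      ∑ k ∈ range (2 * m + 3),
        (-1) ^ k * gaussBinom q (2 * m + 2) k * q ^ (k.choose 2 + m * (2 * m + 2 - k)) * w ^ k := by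
  rw [← prod_range_pow_add_pow_mul_neg, prod_range_add_pow_mul]
  refine sum_congr rfl fun k _ => ?_
  rw [neg_pow, pow_add, pow_mul]
  ring

open Polynomial in
theorem finite_triple_product_derivative (m : ℕ) :
    q ^ (3 * (m + 1).choose 2) * ((-1) ^ (m + 1) * (qPochhammer q (m + 1) * qPochhammer q m)) =
      ∑ k ∈ range (2 * m + 3),
        (-1) ^ k * gaussBinom q (2 * m + 2) k * q ^ (k.choose 2 + m * (2 * m + 2 - k)) * k := by
  have h := congrArg (fun f => (derivative f).eval 1) (finite_triple_product (C q) X m)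
  simp only [← map_gaussBinom, ← map_pow, ← map_neg, ← map_one (C (R := R)), ← map_mul] at h
  rw [prod_mul_distrib, prod_range_succ' (fun i => C (q ^ i) - X)] at h
  simp only [derivative_sum, derivative_C_mul_X_pow] at h
  simp only [map_pow, map_one, pow_zero, derivative_mul, derivative_sub, derivative_one,
    derivative_X, zero_sub, mul_neg, mul_one, eval_add, eval_mul, eval_prod, eval_sub, eval_one,
    eval_pow, eval_C, eval_X, sub_self, mul_zero, eval_neg, zero_add, map_mul, map_neg, map_natCast,
    eval_finsetSum, eval_natCast, one_pow] at h
  have hneg : ∏ i ∈ range m, (q ^ (i + 1) - 1) = (-1) ^ m * qPochhammer q m := by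
    have := prod_neg (s := range m) (fun i => 1 - q ^ (i + 1))
    rw [card_range] at this
    rw [qPochhammer, ← this]
    exact prod_congr rfl fun i _ => by ring
  rw [hneg] at h
  rw [← h, qPochhammer]
  ring

-- The terms `k = m - j` and `k = m + 1 + j` of `finite_triple_product_derivative` carry the same
-- power `q ^ (3 * (m + 1).choose 2 + (j + 1).choose 2)`; this is the sum of their coefficients.
def finiteJacobiCoeff (m j : ℕ) : R :=
  (-1) ^ (m - j) * gaussBinom q (2 * m + 2) (m - j) * ((m - j : ℕ) : R) +
    (-1) ^ (m + 1 + j) * gaussBinom q (2 * m + 2) (m + 1 + j) * ((m + 1 + j : ℕ) : R)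

theorem finite_jacobi (m : ℕ) :
    q ^ (3 * (m + 1).choose 2) * ((-1) ^ (m + 1) * (qPochhammer q (m + 1) * qPochhammer q m)) =
      q ^ (3 * (m + 1).choose 2) *
        ∑ j ∈ range (m + 2), finiteJacobiCoeff q m j * q ^ (j + 1).choose 2 := by
  set c := 3 * (m + 1).choose 2
  have hlow : ∑ j ∈ range (m + 1), (-1) ^ (m + 1 - 1 - j) * gaussBinom q (2 * m + 2) (m + 1 - 1 - j) *
        q ^ ((m + 1 - 1 - j).choose 2 + m * (2 * m + 2 - (m + 1 - 1 - j))) * ((m + 1 - 1 - j : ℕ) : R) =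
      ∑ j ∈ range (m + 2), q ^ c * ((-1) ^ (m - j) * gaussBinom q (2 * m + 2) (m - j) *
        ((m - j : ℕ) : R) * q ^ (j + 1).choose 2) := by
    rw [sum_range_succ _ (m + 1), Nat.sub_eq_zero_of_le (Nat.le_succ m), Nat.cast_zero, mul_zero,
      zero_mul, mul_zero, add_zero]
    refine sum_congr rfl fun j hj => ?_
    rw [Nat.add_sub_cancel, choose_two_sub_add_mul (Nat.lt_succ_iff.mp (mem_range.mp hj)), pow_add]
    ring
  have hhigh : ∑ j ∈ range (m + 2), (-1) ^ (m + 1 + j) * gaussBinom q (2 * m + 2) (m + 1 + j) *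
        q ^ ((m + 1 + j).choose 2 + m * (2 * m + 2 - (m + 1 + j))) * ((m + 1 + j : ℕ) : R) =
      ∑ j ∈ range (m + 2), q ^ c * ((-1) ^ (m + 1 + j) * gaussBinom q (2 * m + 2) (m + 1 + j) *
        ((m + 1 + j : ℕ) : R) * q ^ (j + 1).choose 2) := by
    refine sum_congr rfl fun j hj => ?_
    rw [choose_two_add_add_mul (Nat.lt_succ_iff.mp (mem_range.mp hj)), pow_add]
    ring
  rw [finite_triple_product_derivative, show 2 * m + 3 = (m + 1) + (m + 2) by ring, sum_range_add,
    ← sum_range_reflect _ (m + 1), hlow, hhigh, ← sum_add_distrib, mul_sum]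
  refine sum_congr rfl fun j _ => ?_
  rw [finiteJacobiCoeff]
  ring

end GaussianBinomial

section SModEq

variable {A : Type*} [CommRing A] {I : Ideal A}

lemma SModEq.of_isUnit_mul {u a b : A} (hu : IsUnit u) (h : u * a ≡ u * b [SMOD I]) :
    a ≡ b [SMOD I] := by
  obtain ⟨v, hv⟩ := hu.exists_left_inv
  simpa [← mul_assoc, hv] using (SModEq.refl v).mul h

lemma sum_range_smodEq_of_le {K N : ℕ} (h : K ≤ N) {f : ℕ → A} (hf : ∀ j, K ≤ j → f j ∈ I) :
    ∑ j ∈ range N, f j ≡ ∑ j ∈ range K, f j [SMOD I] := by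
  obtain ⟨r, rfl⟩ := Nat.exists_eq_add_of_le h
  rw [sum_range_add, ← sub_smodEq_zero, add_sub_cancel_left, SModEq.zero]
  exact I.sum_mem fun j _ => hf _ (Nat.le_add_right K j)

end SModEq

namespace PowerSeries

variable {A B : Type*} [CommRing A] [CommRing B]

lemma smodEq_X_pow_iff {K : ℕ} {f g : A⟦X⟧} :
    f ≡ g [SMOD Ideal.span {X ^ K}] ↔ ∀ N < K, coeff N f = coeff N g := by
  simp only [SModEq.sub_mem, Ideal.mem_span_singleton, X_pow_dvd_iff, map_sub, sub_eq_zero]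

lemma map_smodEq (φ : A →+* B) {K : ℕ} {f g : A⟦X⟧} (h : f ≡ g [SMOD Ideal.span {X ^ K}]) :
    map φ f ≡ map φ g [SMOD Ideal.span {X ^ K}] := by
  rw [smodEq_X_pow_iff] at h ⊢
  intro N hN
  rw [coeff_map, coeff_map, h N hN]

lemma expand_smodEq {p : ℕ} (hp : p ≠ 0) {K : ℕ} {f g : A⟦X⟧}
    (h : f ≡ g [SMOD Ideal.span {X ^ K}]) :
    expand p hp f ≡ expand p hp g [SMOD Ideal.span {X ^ K}] := by
  rw [SModEq.sub_mem, Ideal.mem_span_singleton] at h ⊢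
  have := map_dvd (expand p hp) h
  rw [map_sub, map_pow, expand_X, ← pow_mul] at this
  exact (pow_dvd_pow X (Nat.le_mul_of_pos_left K (Nat.pos_of_ne_zero hp))).trans this

lemma pow_mem_span_X_pow {q : A⟦X⟧} (hq : X ∣ q) {K n : ℕ} (h : K ≤ n) :
    q ^ n ∈ Ideal.span {X ^ K} :=
  Ideal.mem_span_singleton.mpr ((pow_dvd_pow X h).trans (pow_dvd_pow_of_dvd hq n))

lemma qPochhammer_succ_smodEq {q : A⟦X⟧} (hq : X ∣ q) {K n : ℕ} (h : K ≤ n + 1) :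
    qPochhammer q (n + 1) ≡ qPochhammer q n [SMOD Ideal.span {X ^ K}] := by
  rw [qPochhammer_succ]
  simpa using (SModEq.refl (qPochhammer q n)).mul
    ((SModEq.refl 1).sub (SModEq.zero.mpr (pow_mem_span_X_pow hq h)))

lemma qPochhammer_smodEq {q : A⟦X⟧} (hq : X ∣ q) {K m : ℕ} (h : K ≤ m) :
    qPochhammer q m ≡ qPochhammer q K [SMOD Ideal.span {X ^ K}] := by
  induction m, h using Nat.le_induction with
  | base => rfl
  | succ m hm ih => exact (qPochhammer_succ_smodEq hq (by omega)).trans ih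

lemma isUnit_qPochhammer {q : A⟦X⟧} (hq : X ∣ q) (m : ℕ) : IsUnit (qPochhammer q m) := by
  have hq0 : constantCoeff q = 0 := by simpa [X_dvd_iff] using hq
  simp [isUnit_iff_constantCoeff, qPochhammer, hq0]

lemma gaussBinom_mul_qPochhammer_sq_smodEq {q : A⟦X⟧} (hq : X ∣ q) {K n k : ℕ}
    (hk : K ≤ k) (hnk : K + k ≤ n) :
    gaussBinom q n k * qPochhammer q K ^ 2 ≡ qPochhammer q K [SMOD Ideal.span {X ^ K}] := by
  obtain ⟨b, rfl⟩ := Nat.exists_eq_add_of_le (le_of_add_le_right hnk)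
  have h := (SModEq.refl (gaussBinom q (k + b) k)).mul
    ((qPochhammer_smodEq hq hk).mul (qPochhammer_smodEq hq (K := K) (m := b) (by omega)))
  rw [← mul_assoc, gaussBinom_add_mul_qPochhammer] at h
  rw [sq]
  exact h.symm.trans (qPochhammer_smodEq hq (by omega))

lemma finiteJacobiCoeff_mul_sq_smodEq {K j : ℕ} (hj : j < K) :
    finiteJacobiCoeff (X : A⟦X⟧) (2 * K) j * qPochhammer X K ^ 2 ≡
      -(C ((-1 : A) ^ j * (2 * j + 1)) * qPochhammer X K) [SMOD Ideal.span {X ^ K}] := by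
  set P := qPochhammer (X : A⟦X⟧) K
  have h₁ := gaussBinom_mul_qPochhammer_sq_smodEq (dvd_refl (X : A⟦X⟧)) (K := K)
    (n := 2 * (2 * K) + 2) (k := 2 * K - j) (by omega) (by omega)
  have h₂ := gaussBinom_mul_qPochhammer_sq_smodEq (dvd_refl (X : A⟦X⟧)) (K := K)
    (n := 2 * (2 * K) + 2) (k := 2 * K + 1 + j) (by omega) (by omega)
  have hsign : (-1 : A⟦X⟧) ^ (2 * K - j) = (-1) ^ j := by
    rw [neg_one_pow_eq_pow_mod_two, show (2 * K - j) % 2 = j % 2 by omega,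
      ← neg_one_pow_eq_pow_mod_two]
  calc _ = (-1) ^ (2 * K - j) * ((2 * K - j : ℕ) : A⟦X⟧) *
          (gaussBinom X (2 * (2 * K) + 2) (2 * K - j) * P ^ 2) +
        (-1) ^ (2 * K + 1 + j) * ((2 * K + 1 + j : ℕ) : A⟦X⟧) *
          (gaussBinom X (2 * (2 * K) + 2) (2 * K + 1 + j) * P ^ 2) := by
        rw [finiteJacobiCoeff]; ring
    _ ≡ (-1) ^ (2 * K - j) * ((2 * K - j : ℕ) : A⟦X⟧) * P +
        (-1) ^ (2 * K + 1 + j) * ((2 * K + 1 + j : ℕ) : A⟦X⟧) * P [SMOD Ideal.span {X ^ K}] :=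
      ((SModEq.refl ((-1) ^ (2 * K - j) * ((2 * K - j : ℕ) : A⟦X⟧))).mul h₁).add
        ((SModEq.refl ((-1) ^ (2 * K + 1 + j) * ((2 * K + 1 + j : ℕ) : A⟦X⟧))).mul h₂)
    _ = _ := by
      rw [hsign, pow_add, Odd.neg_one_pow ⟨K, rfl⟩, Nat.cast_sub (by omega)]
      simp only [map_mul, map_pow, map_neg, map_one, map_add, map_natCast, map_ofNat]
      push_cast
      ring

variable (A) in
noncomputable def jacobiPartialSum (K : ℕ) : A⟦X⟧ :=
  ∑ i ∈ range K, C ((-1 : A) ^ i * (2 * i + 1)) * X ^ (i + 1).choose 2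

theorem qPochhammer_X_pow_three_smodEq (K : ℕ) :
    qPochhammer (X : A⟦X⟧) K ^ 3 ≡ jacobiPartialSum A K [SMOD Ideal.span {X ^ K}] := by
  set P := qPochhammer (X : A⟦X⟧) K
  have hX : (X : A⟦X⟧) ∣ X := dvd_rfl
  have hfin := X_pow_mul_cancel (finite_jacobi (X : A⟦X⟧) (2 * K))
  have h : -(P * P ^ 3) ≡ -(P * jacobiPartialSum A K) [SMOD Ideal.span {X ^ K}] :=
    calc -(P * P ^ 3) = -1 * (P * P) * P ^ 2 := by ring
      _ ≡ (-1) ^ (2 * K + 1) * (qPochhammer X (2 * K + 1) * qPochhammer X (2 * K)) * P ^ 2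
          [SMOD Ideal.span {X ^ K}] := by
        rw [Odd.neg_one_pow ⟨K, rfl⟩]
        exact (((SModEq.refl (-1)).mul ((qPochhammer_smodEq (K := K) (m := 2 * K + 1) hX
          (by omega)).mul (qPochhammer_smodEq (K := K) (m := 2 * K) hX (by omega)))).mul
          (SModEq.refl (P ^ 2))).symm
      _ = ∑ j ∈ range (2 * K + 2),
            finiteJacobiCoeff X (2 * K) j * P ^ 2 * X ^ (j + 1).choose 2 := by
        rw [hfin, sum_mul]
        exact sum_congr rfl fun j _ => by ring
      _ ≡ ∑ j ∈ range K, finiteJacobiCoeff X (2 * K) j * P ^ 2 * X ^ (j + 1).choose 2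
          [SMOD Ideal.span {X ^ K}] :=
        sum_range_smodEq_of_le (by omega) fun j hj =>
          Ideal.mul_mem_left _ _ (pow_mem_span_X_pow hX (hj.trans (le_choose_two_succ j)))
      _ ≡ ∑ j ∈ range K, -(C ((-1 : A) ^ j * (2 * j + 1)) * P) * X ^ (j + 1).choose 2
          [SMOD Ideal.span {X ^ K}] :=
        SModEq.sum fun j hj =>
          (finiteJacobiCoeff_mul_sq_smodEq (A := A) (mem_range.mp hj)).mul
            (SModEq.refl (X ^ (j + 1).choose 2))
      _ = -(P * jacobiPartialSum A K) := by
        rw [jacobiPartialSum, mul_sum, ← sum_neg_distrib]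
        exact sum_congr rfl fun j _ => by ring
  exact SModEq.of_isUnit_mul (isUnit_qPochhammer hX K) (by simpa using h.neg)

end PowerSeries

namespace PowerSeries

variable {A : Type*} [CommRing A]

lemma coeff_expand_mul_eq_zero {p : ℕ} (hp : p ≠ 0) (V G : A⟦X⟧) {c : ℕ}
    (hG : ∀ i ≤ c, i ≡ c [MOD p] → coeff i G = 0) : coeff c (expand p hp V * G) = 0 := by
  rw [coeff_mul]
  refine sum_eq_zero fun x hx => ?_
  rw [HasAntidiagonal.mem_antidiagonal] at hx
  by_cases hdvd : p ∣ x.1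
  · rw [hG x.2 (by omega) ((Nat.modEq_iff_dvd' (by omega)).mpr (by rwa [← hx, Nat.add_sub_cancel])),
      mul_zero]
  · rw [coeff_expand_of_not_dvd p hp V hdvd, zero_mul]

lemma pow_eq_expand_zmod (p : ℕ) [Fact p.Prime] (f : (ZMod p)⟦X⟧) :
    f ^ p = expand p (Fact.out : p.Prime).ne_zero f := by
  rw [← MvPowerSeries.map_frobenius_expand p (Fact.out : p.Prime).ne_zero, ZMod.frobenius_zmod]
  rfl

end PowerSeries

open PowerSeries

/-- `-2` is not a square modulo `13`. -/
lemma mul_eq_zero_of_sq_add_two_mul_sq_eq_zero_zmod13 :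
    ∀ u v : ZMod 13, u ^ 2 + 2 * v ^ 2 = 0 → u * v = 0 := by
  decide

theorem coeff_jacobiPartialSum_mul_expand_two_eq_zero (K c : ℕ) (hc : c % 13 = 11) :
    coeff c (jacobiPartialSum (ZMod 13) K * expand 2 two_ne_zero (jacobiPartialSum (ZMod 13) K)) =
      0 := by
  have hexpand : expand 2 two_ne_zero (jacobiPartialSum (ZMod 13) K) =
      ∑ i ∈ range K, C ((-1 : ZMod 13) ^ i * (2 * i + 1)) * X ^ (2 * (i + 1).choose 2) := by
    unfold jacobiPartialSum
    rw [map_sum]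
    exact sum_congr rfl fun i _ => by rw [map_mul, expand_C, map_pow, expand_X, ← pow_mul]
  rw [hexpand, jacobiPartialSum, sum_mul_sum, map_sum]
  refine sum_eq_zero fun i _ => ?_
  rw [map_sum]
  refine sum_eq_zero fun i' _ => ?_
  rw [show ∀ (a b : ZMod 13) (e f : ℕ), C a * X ^ e * (C b * X ^ f) = C (a * b) * X ^ (e + f) by
    intros; rw [map_mul, pow_add]; ring, coeff_C_mul_X_pow]
  split_ifs with h
  · have hsq : 8 * c + 3 = (2 * i + 1) ^ 2 + 2 * (2 * i' + 1) ^ 2 := by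
      rw [h, show (2 * i + 1) ^ 2 = 4 * (i * (i + 1)) + 1 by ring,
        show (2 * i' + 1) ^ 2 = 4 * (i' * (i' + 1)) + 1 by ring,
        ← two_mul_choose_two_succ i, ← two_mul_choose_two_succ i']
      ring
    have hzero : ((2 * i + 1 : ℕ) : ZMod 13) ^ 2 + 2 * ((2 * i' + 1 : ℕ) : ZMod 13) ^ 2 = 0 := by
      have : ((8 * c + 3 : ℕ) : ZMod 13) = 0 := (ZMod.natCast_eq_zero_iff _ _).mpr (by omega)
      rw [hsq] at this
      exact_mod_cast this
    have := mul_eq_zero_of_sq_add_two_mul_sq_eq_zero_zmod13 _ _ hzero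
    push_cast at this
    linear_combination (-1 : ZMod 13) ^ i * (-1) ^ i' * this
  · rfl

theorem ElongatedDiamondGF.smodEq {d : ℕ → ℕ → ℤ} (hd : ElongatedDiamondGF d) {k : ℕ}
    (hk : 1 ≤ k) (K : ℕ) :
    PowerSeries.mk (fun i => d k i) * qPochhammer (X : ℤ⟦X⟧) K ^ (3 * k + 1) ≡
      qPochhammer (X ^ 2) K ^ k [SMOD Ideal.span {X ^ K}] := by
  rw [smodEq_X_pow_iff]
  intro N hN
  have hX2 : (X : ℤ⟦X⟧) ∣ X ^ 2 := dvd_pow_self X two_ne_zero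
  have hA := (qPochhammer_smodEq (K := N + 1) (dvd_refl (X : ℤ⟦X⟧)) hN).trans
    (qPochhammer_succ_smodEq dvd_rfl le_rfl)
  have hB := (qPochhammer_smodEq (K := N + 1) hX2 hN).trans (qPochhammer_succ_smodEq hX2 le_rfl)
  have h := hd k hk N
  simp only [prod_pow, pow_mul, prod_Icc_one_sub_pow] at h
  have hA' := smodEq_X_pow_iff.mp
    ((SModEq.refl (PowerSeries.mk fun i => d k i)).mul (hA.pow (3 * k + 1))) N N.lt_succ_self
  have hB' := smodEq_X_pow_iff.mp (hB.pow k) N N.lt_succ_self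
  exact hA'.trans (h.trans hB'.symm)

theorem ElongatedDiamondGF.exists_smodEq_expand_mul_jacobiPartialSum {d : ℕ → ℕ → ℤ}
    (hd : ElongatedDiamondGF d) (j K : ℕ) :
    ∃ W : (ZMod 13)⟦X⟧, map (Int.castRingHom (ZMod 13)) (PowerSeries.mk fun i => d (13 * j + 3) i) ≡
      expand 13 (by norm_num) W *
        (jacobiPartialSum (ZMod 13) K * expand 2 two_ne_zero (jacobiPartialSum (ZMod 13) K))
      [SMOD Ideal.span {X ^ K}] := by
  have : Fact (Nat.Prime 13) := ⟨by norm_num⟩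
  set A := qPochhammer (X : (ZMod 13)⟦X⟧) K
  set D := map (Int.castRingHom (ZMod 13)) (PowerSeries.mk fun i => d (13 * j + 3) i)
  have hB : qPochhammer (X ^ 2 : (ZMod 13)⟦X⟧) K = expand 2 two_ne_zero A := by
    rw [map_qPochhammer, expand_X]
  have hDAB : D * A ^ (3 * (13 * j + 3) + 1) ≡ expand 2 two_ne_zero A ^ (13 * j + 3)
      [SMOD Ideal.span {X ^ K}] := by
    simpa [map_qPochhammer, hB] using
      map_smodEq (Int.castRingHom (ZMod 13)) (hd.smodEq (k := 13 * j + 3) (by omega) K)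
  obtain ⟨V, hV⟩ :=
    ((isUnit_qPochhammer (dvd_refl (X : (ZMod 13)⟦X⟧)) K).pow (3 * j + 1)).exists_left_inv
  have hpow : ∀ (f : (ZMod 13)⟦X⟧) (e : ℕ), f ^ (13 * e) = expand 13 (by norm_num) (f ^ e) :=
    fun f e => by rw [pow_mul, pow_eq_expand_zmod, map_pow]
  have hL : D * A ^ (3 * (13 * j + 3) + 1) * (A ^ 3 * expand 13 (by norm_num) V) = D := by
    calc _ = D * (expand 13 (by norm_num) (A ^ (3 * j + 1)) * expand 13 (by norm_num) V) := by
          rw [← hpow, show 13 * (3 * j + 1) = 3 * (13 * j + 3) + 1 + 3 by ring, pow_add]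
          ring
      _ = D := by rw [← map_mul, mul_comm _ V, hV, map_one, mul_one]
  have hR : expand 2 two_ne_zero A ^ (13 * j + 3) * (A ^ 3 * expand 13 (by norm_num) V) =
      expand 13 (by norm_num) (V * expand 2 two_ne_zero A ^ j) *
        (A ^ 3 * expand 2 two_ne_zero (A ^ 3)) := by
    rw [map_mul, ← hpow, pow_add, map_pow]
    ring
  have hJ := qPochhammer_X_pow_three_smodEq (A := ZMod 13) K
  have key := hDAB.mul (SModEq.refl (A ^ 3 * expand 13 (by norm_num) V))
  rw [hL, hR] at key
  exact ⟨_, key.trans ((SModEq.refl _).mul (hJ.mul (expand_smodEq two_ne_zero hJ)))⟩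

theorem stmt_17 (d : ℕ → ℕ → ℤ) (hd : ElongatedDiamondGF d) :
    ∀ n j : ℕ, (13 : ℤ) ∣ d (13 * j + 3) (13 * n + 11) := by
  intro n j
  obtain ⟨W, hW⟩ := hd.exists_smodEq_expand_mul_jacobiPartialSum j (13 * n + 12)
  have hc := smodEq_X_pow_iff.mp hW (13 * n + 11) (by omega)
  rw [coeff_expand_mul_eq_zero _ _ _ fun i _ hi =>
      coeff_jacobiPartialSum_mul_expand_two_eq_zero _ i (by unfold Nat.ModEq at hi; omega),
    coeff_map, coeff_mk] at hc
  exact (ZMod.intCast_zmod_eq_zero_iff_dvd _ 13).mp hc
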